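/- Let V : Θ → ℝ be continuous. Then max over H ∈ ℋ of ∫ V dH equals ∫₀¹ max{V(x) : x ∈ [H̄^{-1}(p), H̲^{-1}(p)]} dp, and the maximum over ℋ is attained. -/

import Mathlib

open MeasureTheory Set Filter Topology

noncomputable section

/-- A CDF on `[a,b]`: nondecreasing, right-continuous, `0` below `a`, `1` from `b` on. -/
def IsCDF (a b : ℝ) (G : ℝ → ℝ) : Prop :=
  Monotone G ∧ (∀ x : ℝ, ContinuousWithinAt G (Set.Ici x) x) ∧
    (∀ x : ℝ, x < a → G x = 0) ∧ (∀ x : ℝ, b ≤ x → G x = 1)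

/-- The set of `q`-quantiles of `G` on `[a,b]`. -/
def QSet (a b q : ℝ) (G : ℝ → ℝ) : Set ℝ :=
  {x | x ∈ Set.Icc a b ∧ Function.leftLim G x ≤ q ∧ q ≤ G x}

/-- Generalized inverse `G⁻¹(p) = inf {θ ∈ [a,b] : G θ ≥ p}`. -/
def ginv (a b : ℝ) (G : ℝ → ℝ) (p : ℝ) : ℝ :=
  sInf {θ | θ ∈ Set.Icc a b ∧ p ≤ G θ}

namespace CDFHelp

variable {a b q : ℝ} {G F : ℝ → ℝ} {p : ℝ}

lemma cdf_nonneg (hG : IsCDF a b G) (x : ℝ) : 0 ≤ G x := by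
  rcases lt_or_ge x a with h | h
  · rw [hG.2.2.1 x h]
  · rw [← hG.2.2.1 (a - 1) (by linarith)]
    exact hG.1 (by linarith)

lemma cdf_le_one (hG : IsCDF a b G) (x : ℝ) : G x ≤ 1 := by
  rcases le_or_gt b x with h | h
  · rw [hG.2.2.2 x h]
  · rw [← hG.2.2.2 b le_rfl]
    exact hG.1 h.le

lemma b_mem (hab : a ≤ b) (hG : IsCDF a b G) (hp : p ≤ 1) :
    b ∈ {θ | θ ∈ Set.Icc a b ∧ p ≤ G θ} :=
  ⟨⟨hab, le_rfl⟩, by rw [hG.2.2.2 b le_rfl]; exact hp⟩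

lemma bddBelow_S : BddBelow {θ | θ ∈ Set.Icc a b ∧ p ≤ G θ} :=
  ⟨a, fun _ hx => hx.1.1⟩

lemma ginv_mem (hab : a ≤ b) (hG : IsCDF a b G) (hp : p ≤ 1) :
    ginv a b G p ∈ Set.Icc a b :=
  ⟨le_csInf ⟨b, b_mem hab hG hp⟩ (fun _ hx => hx.1.1),
   csInf_le bddBelow_S (b_mem hab hG hp)⟩

lemma le_G_ginv (hab : a ≤ b) (hG : IsCDF a b G) (hp : p ≤ 1) :
    p ≤ G (ginv a b G p) := by
  set s : Set ℝ := {θ | θ ∈ Set.Icc a b ∧ p ≤ G θ} with hs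
  have hne : s.Nonempty := ⟨b, b_mem hab hG hp⟩
  have key : ∀ z, sInf s < z → p ≤ G z := by
    intro z hz
    obtain ⟨w, hw, hwz⟩ := exists_lt_of_csInf_lt hne hz
    exact hw.2.trans (hG.1 hwz.le)
  have h1 : Filter.Tendsto G (𝓝[>] (sInf s)) (𝓝 (G (sInf s))) :=
    (hG.2.1 (sInf s)).mono_left (nhdsWithin_mono _ Set.Ioi_subset_Ici_self)
  have h2 : ∀ᶠ z in 𝓝[>] (sInf s), p ≤ G z :=
    eventually_nhdsWithin_of_forall (fun z hz => key z hz)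
  exact ge_of_tendsto h1 h2

lemma ginv_le_iff (hab : a ≤ b) (hG : IsCDF a b G) (hp : p ≤ 1) {x : ℝ}
    (hx : x ∈ Set.Icc a b) : ginv a b G p ≤ x ↔ p ≤ G x := by
  constructor
  · intro h; exact (le_G_ginv hab hG hp).trans (hG.1 h)
  · intro h; exact csInf_le bddBelow_S ⟨hx, h⟩

lemma ginv_anti {G₁ G₂ : ℝ → ℝ} (hab : a ≤ b) (hG₁ : IsCDF a b G₁)
    (hle : ∀ x ∈ Set.Icc a b, G₁ x ≤ G₂ x) (hp : p ≤ 1) :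
    ginv a b G₂ p ≤ ginv a b G₁ p :=
  csInf_le_csInf bddBelow_S ⟨b, b_mem hab hG₁ hp⟩
    (fun x hx => ⟨hx.1, hx.2.trans (hle x hx.1)⟩)

lemma ginv_mono (hab : a ≤ b) (hG : IsCDF a b G) {p' : ℝ} (hp' : p' ≤ 1)
    (hpp' : p ≤ p') : ginv a b G p ≤ ginv a b G p' :=
  csInf_le_csInf bddBelow_S ⟨b, b_mem hab hG hp'⟩
    (fun x hx => ⟨hx.1, hpp'.trans hx.2⟩)

lemma isCDF_Hbar (hq : q ∈ Set.Ioo (0:ℝ) 1) (hF : IsCDF a b F) :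
    IsCDF a b (fun y => min (F y / q) 1) := by
  obtain ⟨hq0, hq1⟩ := hq
  refine ⟨?_, ?_, ?_, ?_⟩
  · intro x y hxy
    exact min_le_min (by gcongr; exact hF.1 hxy) le_rfl
  · intro x
    exact ((hF.2.1 x).div_const q).min continuousWithinAt_const
  · intro x hx
    simp only [hF.2.2.1 x hx, zero_div]
    exact min_eq_left zero_le_one
  · intro x hx
    simp only [hF.2.2.2 x hx]
    rw [min_eq_right]
    rw [le_div_iff₀ hq0]
    linarith

lemma isCDF_Hlow (hq : q ∈ Set.Ioo (0:ℝ) 1) (hF : IsCDF a b F) :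
    IsCDF a b (fun y => max 0 ((F y - q) / (1 - q))) := by
  obtain ⟨hq0, hq1⟩ := hq
  have h1q : (0:ℝ) < 1 - q := by linarith
  refine ⟨?_, ?_, ?_, ?_⟩
  · intro x y hxy
    refine max_le_max le_rfl ((div_le_div_iff_of_pos_right h1q).mpr ?_)
    have := hF.1 hxy; linarith
  · intro x
    exact continuousWithinAt_const.max
      (((hF.2.1 x).sub continuousWithinAt_const).div_const (1 - q))
  · intro x hx
    simp only [hF.2.2.1 x hx, zero_sub]
    rw [max_eq_left]
    exact div_nonpos_of_nonpos_of_nonneg (by linarith) h1q.le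
  · intro x hx
    simp only [hF.2.2.2 x hx]
    rw [div_self h1q.ne', max_eq_right zero_le_one]

lemma Hlow_le_Hbar (hq : q ∈ Set.Ioo (0:ℝ) 1) (hF : IsCDF a b F) (x : ℝ) :
    max 0 ((F x - q) / (1 - q)) ≤ min (F x / q) 1 := by
  obtain ⟨hq0, hq1⟩ := hq
  have h1q : (0:ℝ) < 1 - q := by linarith
  have hF0 := cdf_nonneg hF x
  have hF1 := cdf_le_one hF x
  refine max_le (le_min (by positivity) zero_le_one) (le_min ?_ ?_)
  · rw [div_le_div_iff₀ h1q hq0]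
    nlinarith [sq_nonneg (q - F x)]
  · rw [div_le_one h1q]; linarith

end CDFHelp

open CDFHelp

/-- the maximum of `∫ V dH` over `ℋ` is attained and equals
`∫₀¹ max {V(x) : x ∈ [H̄⁻¹(p), H̲⁻¹(p)]} dp` (using the quantile representation
`∫ V dH = ∫₀¹ V(H⁻¹(p)) dp`). -/
theorem optimal_value_formula (a b q : ℝ) (hab : a < b)
    (hq : q ∈ Set.Ioo (0 : ℝ) 1) (F : ℝ → ℝ) (hF : IsCDF a b F)
    (V : ℝ → ℝ) (hV : ContinuousOn V (Set.Icc a b)) :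
    ∃ H : ℝ → ℝ, (IsCDF a b H ∧ ∀ x ∈ Set.Icc a b,
        max 0 ((F x - q) / (1 - q)) ≤ H x ∧ H x ≤ min (F x / q) 1) ∧
      (∀ H' : ℝ → ℝ, (IsCDF a b H' ∧ ∀ x ∈ Set.Icc a b,
          max 0 ((F x - q) / (1 - q)) ≤ H' x ∧ H' x ≤ min (F x / q) 1) →
        (∫ p in Set.Icc (0 : ℝ) 1, V (ginv a b H' p)) ≤
          ∫ p in Set.Icc (0 : ℝ) 1, V (ginv a b H p)) ∧
      (∫ p in Set.Icc (0 : ℝ) 1, V (ginv a b H p)) =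
        ∫ p in Set.Icc (0 : ℝ) 1,
          sSup (V '' Set.Icc (ginv a b (fun y => min (F y / q) 1) p)
            (ginv a b (fun y => max 0 ((F y - q) / (1 - q))) p)) := by
  have hq0 := hq.1
  have hq1 := hq.2
  have hab' : a ≤ b := hab.le
  set Hbar : ℝ → ℝ := fun y => min (F y / q) 1 with hHbar_def
  set Hlow : ℝ → ℝ := fun y => max 0 ((F y - q) / (1 - q)) with hHlow_def
  have hBar : IsCDF a b Hbar := isCDF_Hbar hq hF
  have hLow : IsCDF a b Hlow := isCDF_Hlow hq hF
  have hlb : ∀ x ∈ Set.Icc a b, Hlow x ≤ Hbar x := fun x _ => Hlow_le_Hbar hq hF x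
  set lo : ℝ → ℝ := ginv a b Hbar with hlo_def
  set hi : ℝ → ℝ := ginv a b Hlow with hhi_def
  set M : ℝ → ℝ := fun p => sSup (V '' Set.Icc (lo p) (hi p)) with hM_def
  -- basic facts about the window
  have hlo_mem : ∀ p, p ≤ 1 → lo p ∈ Set.Icc a b := fun p hp => ginv_mem hab' hBar hp
  have hhi_mem : ∀ p, p ≤ 1 → hi p ∈ Set.Icc a b := fun p hp => ginv_mem hab' hLow hp
  have hlohi : ∀ p, p ≤ 1 → lo p ≤ hi p := fun p hp => ginv_anti hab' hLow hlb hp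
  have hwin_sub : ∀ p, p ≤ 1 → Set.Icc (lo p) (hi p) ⊆ Set.Icc a b :=
    fun p hp => Set.Icc_subset_Icc (hlo_mem p hp).1 (hhi_mem p hp).2
  have hlo_mono : ∀ p p', p ≤ p' → p' ≤ 1 → lo p ≤ lo p' :=
    fun p p' h hp' => ginv_mono hab' hBar hp' h
  have hhi_mono : ∀ p p', p ≤ p' → p' ≤ 1 → hi p ≤ hi p' :=
    fun p p' h hp' => ginv_mono hab' hLow hp' h
  have hMbdd : ∀ p, p ≤ 1 → BddAbove (V '' Set.Icc (lo p) (hi p)) :=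
    fun p hp => isCompact_Icc.bddAbove_image (hV.mono (hwin_sub p hp))
  have hM_le : ∀ p, p ≤ 1 → ∀ x ∈ Set.Icc (lo p) (hi p), V x ≤ M p :=
    fun p hp x hx => le_csSup (hMbdd p hp) (Set.mem_image_of_mem V hx)
  -- leftmost maximizer
  set A : ℝ → Set ℝ := fun p => Set.Icc (lo p) (hi p) ∩ V ⁻¹' (Set.Ici (M p)) with hA_def
  set xs : ℝ → ℝ := fun p => sInf (A p) with hxs_def
  have hA : ∀ p, p ≤ 1 → xs p ∈ A p := by
    intro p hp
    have hsub := hwin_sub p hp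
    have hcont : ContinuousOn V (Set.Icc (lo p) (hi p)) := hV.mono hsub
    have hne : (Set.Icc (lo p) (hi p)).Nonempty := Set.nonempty_Icc.mpr (hlohi p hp)
    obtain ⟨z, hz, hzmax⟩ := isCompact_Icc.exists_isMaxOn hne hcont
    have hMz : M p = V z := by
      apply le_antisymm
      · exact csSup_le (hne.image V) (by rintro _ ⟨x, hx, rfl⟩; exact hzmax hx)
      · exact le_csSup (hMbdd p hp) (Set.mem_image_of_mem V hz)
    have hAne : (A p).Nonempty := ⟨z, hz, hMz.le⟩
    have hAbdd : BddBelow (A p) := ⟨lo p, fun x hx => hx.1.1⟩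
    have hAclosed : IsClosed (A p) :=
      hcont.preimage_isClosed_of_isClosed isClosed_Icc isClosed_Ici
    exact hAclosed.csInf_mem hAne hAbdd
  have hxs_mem : ∀ p, p ≤ 1 → xs p ∈ Set.Icc (lo p) (hi p) := fun p hp => (hA p hp).1
  have hVxs : ∀ p, p ≤ 1 → V (xs p) = M p :=
    fun p hp => le_antisymm (hM_le p hp _ (hxs_mem p hp)) (hA p hp).2
  have hxs_mono : ∀ p p', p ≤ p' → p' ≤ 1 → xs p ≤ xs p' := by
    intro p p' hpp' hp'
    have hp : p ≤ 1 := hpp'.trans hp'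
    by_contra hcon
    push_neg at hcon
    have h1 : xs p' ∈ Set.Icc (lo p) (hi p) :=
      ⟨(hlo_mono p p' hpp' hp').trans (hxs_mem p' hp').1, hcon.le.trans (hxs_mem p hp).2⟩
    have h2 : xs p ∈ Set.Icc (lo p') (hi p') :=
      ⟨(hxs_mem p' hp').1.trans hcon.le, (hxs_mem p hp).2.trans (hhi_mono p p' hpp' hp')⟩
    have hMM : M p ≤ V (xs p') := by
      calc M p = V (xs p) := (hVxs p hp).symm
        _ ≤ M p' := hM_le p' hp' _ h2
        _ = V (xs p') := (hVxs p' hp').symm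
        _ ≤ M p := hM_le p hp _ h1
        _ = V (xs p) := (hVxs p hp).symm
        _ ≤ M p' := hM_le p' hp' _ h2
        _ = V (xs p') := (hVxs p' hp').symm
    have : xs p ≤ xs p' := csInf_le ⟨lo p, fun x hx => hx.1.1⟩ ⟨h1, hMM⟩
    linarith
  -- clamped version
  set xsc : ℝ → ℝ := fun p => xs (min 1 p) with hxsc_def
  have hxsc_mono : Monotone xsc :=
    fun p p' h => hxs_mono _ _ (min_le_min le_rfl h) (min_le_left _ _)
  have hxsc_mem : ∀ p, xsc p ∈ Set.Icc a b :=
    fun p => hwin_sub _ (min_le_left 1 p) (hxs_mem _ (min_le_left 1 p))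
  have hxsc_eq : ∀ p, p ≤ 1 → xsc p = xs p := by
    intro p hp
    simp only [hxsc_def, min_eq_right hp]
  -- the optimizer CDF
  set T : ℝ → Set ℝ := fun x => {p | p ∈ Set.Icc (0:ℝ) 1 ∧ xs p ≤ x} with hT_def
  set H : ℝ → ℝ := fun x => sSup (T x) with hH_def
  have hT_bdd : ∀ x, BddAbove (T x) := fun x => ⟨1, fun p hp => hp.1.2⟩
  have hT_le : ∀ x p, p ∈ T x → p ≤ H x := fun x p hp => le_csSup (hT_bdd x) hp
  have hH_nonneg : ∀ x, 0 ≤ H x := fun x => Real.sSup_nonneg (fun p hp => hp.1.1)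
  have hH_le_one : ∀ x, H x ≤ 1 := fun x => Real.sSup_le (fun p hp => hp.1.2) zero_le_one
  have hH_mono : Monotone H := by
    intro x y hxy
    rcases (T x).eq_empty_or_nonempty with he | hne
    · have : H x = 0 := by rw [hH_def]; simp only; rw [he, Real.sSup_empty]
      rw [this]; exact hH_nonneg y
    · exact csSup_le_csSup (hT_bdd y) hne (fun p hp => ⟨hp.1, hp.2.trans hxy⟩)
  have hH_zero : ∀ x, x < a → H x = 0 := by
    intro x hx
    have hTe : T x = ∅ := by
      ext p
      simp only [hT_def, Set.mem_setOf_eq, Set.mem_empty_iff_false, iff_false, not_and]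
      intro hp
      have := (hwin_sub p hp.2 (hxs_mem p hp.2)).1
      intro hle
      linarith
    rw [hH_def]; simp only; rw [hTe, Real.sSup_empty]
  have hH_one : ∀ x, b ≤ x → H x = 1 := by
    intro x hx
    refine le_antisymm (hH_le_one x) (hT_le x 1 ⟨⟨zero_le_one, le_rfl⟩, ?_⟩)
    exact (hxs_mem 1 le_rfl).2.trans ((hhi_mem 1 le_rfl).2.trans hx)
  have hH_rc : ∀ x, ContinuousWithinAt H (Set.Ici x) x := by
    intro x
    have htend : Tendsto H (𝓝[>] x) (𝓝 (sInf (H '' Set.Ioi x))) :=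
      hH_mono.tendsto_nhdsGT x
    have hbddb : BddBelow (H '' Set.Ioi x) :=
      ⟨H x, by rintro _ ⟨z, hz, rfl⟩; exact hH_mono hz.le⟩
    have hinf : sInf (H '' Set.Ioi x) = H x := by
      refine le_antisymm ?_ (le_csInf (Set.nonempty_Ioi.image H)
        (by rintro _ ⟨y, hy, rfl⟩; exact hH_mono hy.le))
      by_contra hlt
      push_neg at hlt
      set c := (H x + sInf (H '' Set.Ioi x)) / 2 with hc_def
      have hc1 : H x < c := by
        rw [hc_def]; linarith
      have hc2 : c < sInf (H '' Set.Ioi x) := by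
        rw [hc_def]; linarith
      have hc0 : 0 ≤ c := (hH_nonneg x).trans hc1.le
      have hc_le1 : c ≤ 1 := by
        have h1 : sInf (H '' Set.Ioi x) ≤ H (x + 1) :=
          csInf_le hbddb (Set.mem_image_of_mem H (by simp : x + 1 ∈ Set.Ioi x))
        have := hH_le_one (x + 1)
        linarith
      have hxc : ∀ y, x < y → xs c ≤ y := by
        intro y hy
        have hcy : c < H y :=
          lt_of_lt_of_le hc2 (csInf_le hbddb (Set.mem_image_of_mem H hy))
        have hTne : (T y).Nonempty := by
          by_contra hne
          rw [Set.not_nonempty_iff_eq_empty] at hne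
          have h0 : H y = 0 := by rw [hH_def]; simp only; rw [hne, Real.sSup_empty]
          rw [h0] at hcy
          linarith
        obtain ⟨p, hpT, hcp⟩ := exists_lt_of_lt_csSup hTne hcy
        exact (hxs_mono c p hcp.le hpT.1.2).trans hpT.2
      have hxcx : xs c ≤ x := by
        by_contra hxx
        push_neg at hxx
        have := hxc ((x + xs c) / 2) (by linarith)
        linarith
      have : c ≤ H x := hT_le x c ⟨⟨hc0, hc_le1⟩, hxcx⟩
      linarith
    rw [ContinuousWithinAt, ← Set.Ioi_insert, nhdsWithin_insert, tendsto_sup]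
    exact ⟨tendsto_pure_nhds H x, hinf ▸ htend⟩
  have hHCDF : IsCDF a b H := ⟨hH_mono, hH_rc, hH_zero, hH_one⟩
  have hH_band : ∀ x ∈ Set.Icc a b, Hlow x ≤ H x ∧ H x ≤ Hbar x := by
    intro x hx
    constructor
    · refine hT_le x (Hlow x) ⟨⟨cdf_nonneg hLow x, cdf_le_one hLow x⟩, ?_⟩
      exact (hxs_mem _ (cdf_le_one hLow x)).2.trans
        ((ginv_le_iff hab' hLow (cdf_le_one hLow x) hx).mpr le_rfl)
    · refine Real.sSup_le (fun p hp => ?_) (cdf_nonneg hBar x)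
      exact (ginv_le_iff hab' hBar hp.1.2 hx).mp ((hxs_mem p hp.1.2).1.trans hp.2)
  -- ginv H versus xs
  have hginvH_le : ∀ p, 0 ≤ p → p ≤ 1 → ginv a b H p ≤ xs p := by
    intro p hp0 hp1
    exact (ginv_le_iff hab' hHCDF hp1 (hwin_sub p hp1 (hxs_mem p hp1))).mpr
      (hT_le _ p ⟨⟨hp0, hp1⟩, le_rfl⟩)
  have hginvH_ge : ∀ p' p, 0 ≤ p' → p' < p → p ≤ 1 → xs p' ≤ ginv a b H p := by
    intro p' p hp0 hp'p hp1
    have hx : ginv a b H p ∈ Set.Icc a b := ginv_mem hab' hHCDF hp1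
    have hpH : p ≤ H (ginv a b H p) := le_G_ginv hab' hHCDF hp1
    have hTne : (T (ginv a b H p)).Nonempty := by
      by_contra hne
      rw [Set.not_nonempty_iff_eq_empty] at hne
      have h0 : H (ginv a b H p) = 0 := by rw [hH_def]; simp only; rw [hne, Real.sSup_empty]
      rw [h0] at hpH
      linarith
    obtain ⟨p'', hp''T, hlt⟩ := exists_lt_of_lt_csSup hTne (lt_of_lt_of_le hp'p hpH)
    exact (hxs_mono p' p'' hlt.le hp''T.1.2).trans hp''T.2
  -- a.e. identification of ginv H with xs
  have hkey : ∀ p ∈ Set.Ioo (0:ℝ) 1, ContinuousAt xsc p → V (ginv a b H p) = M p := by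
    intro p hp hcont
    have hp1 : p ≤ 1 := hp.2.le
    have heq : ginv a b H p = xs p := by
      refine le_antisymm (hginvH_le p hp.1.le hp1) ?_
      have hev : ∀ᶠ p' in 𝓝[<] p, xsc p' ≤ ginv a b H p := by
        filter_upwards [Ioo_mem_nhdsLT_of_mem (⟨hp.1, le_rfl⟩ : p ∈ Set.Ioc (0:ℝ) p)]
          with p' hp'
        rw [hxsc_eq p' (hp'.2.le.trans hp1)]
        exact hginvH_ge p' p hp'.1.le hp'.2 hp1
      have hlim := le_of_tendsto (hcont.tendsto.mono_left nhdsWithin_le_nhds) hev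
      rwa [hxsc_eq p hp1] at hlim
    rw [heq]
    exact hVxs p hp1
  -- integration setup
  set Vc : ℝ → ℝ := fun x => V (max a (min b x)) with hVc_def
  have hVc_cont : Continuous Vc :=
    hV.comp_continuous (continuous_const.max (continuous_const.min continuous_id))
      (fun x => ⟨le_max_left _ _, max_le hab' (min_le_left _ _)⟩)
  have hVc_eq : ∀ x ∈ Set.Icc a b, Vc x = V x := by
    intro x hx
    rw [hVc_def]
    simp only
    rw [min_eq_right hx.2, max_eq_right hx.1]
  obtain ⟨C, hC⟩ : ∃ C, ∀ x ∈ Set.Icc a b, ‖V x‖ ≤ C :=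
    isCompact_Icc.exists_bound_of_continuousOn hV
  have hInt : ∀ g : ℝ → ℝ, Monotone g → (∀ p, g p ∈ Set.Icc a b) →
      IntegrableOn (fun p => Vc (g p)) (Set.Icc (0:ℝ) 1) := by
    intro g hg hgm
    apply Measure.integrableOn_of_bounded (M := C) measure_Icc_lt_top.ne
    · exact (hVc_cont.measurable.comp hg.measurable).aestronglyMeasurable
    · refine ae_of_all _ (fun p => ?_)
      rw [hVc_eq _ (hgm p)]
      exact hC _ (hgm p)
  have hgmono : ∀ G : ℝ → ℝ, IsCDF a b G → Monotone (fun p => ginv a b G (min 1 p)) :=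
    fun G hG p p' h => ginv_mono hab' hG (min_le_left _ _) (min_le_min le_rfl h)
  have hgmem : ∀ G : ℝ → ℝ, IsCDF a b G → ∀ p, ginv a b G (min 1 p) ∈ Set.Icc a b :=
    fun G hG p => ginv_mem hab' hG (min_le_left _ _)
  have hint_eq : ∀ G : ℝ → ℝ, IsCDF a b G →
      (∫ p in Set.Icc (0:ℝ) 1, V (ginv a b G p)) =
        ∫ p in Set.Icc (0:ℝ) 1, Vc (ginv a b G (min 1 p)) := by
    intro G hG
    refine setIntegral_congr_fun measurableSet_Icc (fun p hp => ?_)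
    rw [min_eq_right hp.2]
    exact (hVc_eq _ (ginv_mem hab' hG hp.2)).symm
  have hIntM : IntegrableOn (fun p => Vc (xsc p)) (Set.Icc (0:ℝ) 1) :=
    hInt xsc hxsc_mono hxsc_mem
  have hM_eq : (∫ p in Set.Icc (0:ℝ) 1, M p) = ∫ p in Set.Icc (0:ℝ) 1, Vc (xsc p) := by
    refine setIntegral_congr_fun measurableSet_Icc (fun p hp => ?_)
    rw [hxsc_eq p hp.2, hVc_eq _ (hwin_sub p hp.2 (hxs_mem p hp.2)), hVxs p hp.2]
  -- the central a.e. equality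
  have hae : (∫ p in Set.Icc (0:ℝ) 1, V (ginv a b H p)) = ∫ p in Set.Icc (0:ℝ) 1, M p := by
    refine setIntegral_congr_ae measurableSet_Icc ?_
    have hD : Set.Countable ({p | ¬ContinuousAt xsc p} ∪ {0, 1} : Set ℝ) :=
      (hxsc_mono.countable_not_continuousAt).union ((Set.countable_singleton (1:ℝ)).insert 0)
    have hD0 : volume ({p | ¬ContinuousAt xsc p} ∪ {0, 1} : Set ℝ) = 0 :=
      Set.Countable.measure_zero hD _
    filter_upwards [measure_eq_zero_iff_ae_notMem.mp hD0] with p hpD hp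
    have h1 : ContinuousAt xsc p := by
      by_contra hcc
      exact hpD (Or.inl hcc)
    have h2 : p ≠ 0 := fun h => hpD (Or.inr (by simp [h]))
    have h3 : p ≠ 1 := fun h => hpD (Or.inr (by simp [h]))
    exact hkey p ⟨lt_of_le_of_ne hp.1 (Ne.symm h2), lt_of_le_of_ne hp.2 h3⟩ h1
  refine ⟨H, ⟨hHCDF, fun x hx => hH_band x hx⟩, ?_, ?_⟩
  · intro H' ⟨hH'cdf, hH'band⟩
    have hband2 : ∀ x ∈ Set.Icc a b, H' x ≤ Hbar x := fun x hx => (hH'band x hx).2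
    have hband1 : ∀ x ∈ Set.Icc a b, Hlow x ≤ H' x := fun x hx => (hH'band x hx).1
    have hle : ∀ p ∈ Set.Icc (0:ℝ) 1,
        Vc (ginv a b H' (min 1 p)) ≤ Vc (xsc p) := by
      intro p hp
      have hplo : lo p ≤ ginv a b H' p := ginv_anti hab' hH'cdf hband2 hp.2
      have hphi : ginv a b H' p ≤ hi p := ginv_anti hab' hLow hband1 hp.2
      rw [min_eq_right hp.2, hVc_eq _ (ginv_mem hab' hH'cdf hp.2),
        hxsc_eq p hp.2, hVc_eq _ (hwin_sub p hp.2 (hxs_mem p hp.2)), hVxs p hp.2]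
      exact hM_le p hp.2 _ ⟨hplo, hphi⟩
    calc (∫ p in Set.Icc (0:ℝ) 1, V (ginv a b H' p))
        = ∫ p in Set.Icc (0:ℝ) 1, Vc (ginv a b H' (min 1 p)) := hint_eq H' hH'cdf
      _ ≤ ∫ p in Set.Icc (0:ℝ) 1, Vc (xsc p) :=
          setIntegral_mono_on (hInt _ (hgmono H' hH'cdf) (hgmem H' hH'cdf)) hIntM
            measurableSet_Icc hle
      _ = ∫ p in Set.Icc (0:ℝ) 1, M p := hM_eq.symm
      _ = ∫ p in Set.Icc (0:ℝ) 1, V (ginv a b H p) := hae.symm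
  · exact hae
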